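/- Let ω ∈ ℂ be a primitive cube root of unity and let f, g be arbitrary polynomials in ℂ[a, b, c]. In the polynomial ring ℂ[a, b, c, x, y, z, w], set F1 := y^3 − ω·x^2·w + (1 − ω)·x·y·z − f and F2 := z^3 − ω^2·x·w^2 − (1 − ω)·x·y·z − g. Then F1 and F2 have no common non-unit factor (every polynomial dividing both F1 and F2 is a nonzero constant); in particular F1, F2 form a regular sequence, so the quotient ℂ[a, b, c, x, y, z, w]/(F1, F2) is a complete intersection. -/

import Mathlib

/-!
As a polynomial in `w`, `F₁ = -ω x² · w + (y³ + (1 - ω) x y z - f)` is linear, and its two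
coefficients are coprime because `x` does not divide `y³ - f`; so `F₁` is prime. The
specialisation `(a, b, c, x, y, z, w) ↦ (0, 0, 0, T, 0, 0, 1)` sends `F₁` and `F₂` to nonzero
polynomials of degrees `2` and `1` in `T`, hence `F₁ ∤ F₂`. A prime not dividing `F₂` is coprime
to it and makes `F₂` a nonzerodivisor modulo `F₁`. Finally `(F₁, F₂)` is a proper ideal since
`(0, 0, 0, 0, ∛f(0), ∛g(0), 0)` is a common zero.
-/

open MvPolynomial

open Pointwise in
theorem Prime.isRegular_pair {R : Type*} [CommRing R] [IsDomain R] {p q : R} (hp : Prime p)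
    (hpq : ¬ p ∣ q) (hspan : Ideal.span {p, q} ≠ ⊤) :
    RingTheory.Sequence.IsRegular R [p, q] := by
  have hmem (x : R) : x ∈ p • (⊤ : Submodule R R) ↔ p ∣ x := by
    rw [← Submodule.ideal_span_singleton_smul, smul_eq_mul, Ideal.mul_top,
      Ideal.mem_span_singleton]
  refine (RingTheory.Sequence.isRegular_iff R [p, q]).2 ⟨?_, ?_⟩
  · simp only [RingTheory.Sequence.isWeaklyRegular_cons_iff,
      isSMulRegular_quotient_iff_mem_of_smul_mem, hmem]
    exact ⟨.of_ne_zero hp.ne_zero, fun x h => (hp.dvd_or_dvd h).resolve_left hpq, .nil _ _⟩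
  · have hset : {r | r ∈ [p, q]} = ({p, q} : Set R) := by ext; simp
    rw [smul_eq_mul, Ideal.mul_top, Ideal.ofList, hset]
    exact hspan.symm

namespace MvPolynomial

variable (R : Type*) [CommSemiring R] (n : ℕ)

noncomputable def finSuccLastEquiv :
    MvPolynomial (Fin (n + 1)) R ≃ₐ[R] Polynomial (MvPolynomial (Fin n) R) :=
  (renameEquiv R (finRotate (n + 1))).trans (finSuccEquiv R n)

variable {R n}

@[simp]
theorem finSuccLastEquiv_X_last : finSuccLastEquiv R n (X (Fin.last n)) = Polynomial.X := by
  simp [finSuccLastEquiv, finSuccEquiv_X_zero]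

@[simp]
theorem finSuccLastEquiv_X_castSucc (i : Fin n) :
    finSuccLastEquiv R n (X i.castSucc) = Polynomial.C (X i) := by
  simp [finSuccLastEquiv, finSuccEquiv_X_succ]

@[simp]
theorem finSuccLastEquiv_rename_castSucc (p : MvPolynomial (Fin n) R) :
    finSuccLastEquiv R n (rename Fin.castSucc p) = Polynomial.C p := by
  have : (finSuccLastEquiv R n).toAlgHom.comp (rename Fin.castSucc) = Polynomial.CAlgHom :=
    algHom_ext fun i => by simp [Polynomial.CAlgHom]
  exact DFunLike.congr_fun this p

@[simp]
theorem finSuccLastEquiv_C (a : R) : finSuccLastEquiv R n (C a) = Polynomial.C (C a) := by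
  simpa using finSuccLastEquiv_rename_castSucc (C a : MvPolynomial (Fin n) R)

theorem aeval_rename_castLE_of_forall_eq_zero {S : Type*} [CommSemiring S] [Algebra R S]
    {m : ℕ} (h : m ≤ n) {v : Fin n → S} (hv : ∀ i, v (Fin.castLE h i) = 0)
    (p : MvPolynomial (Fin m) R) :
    aeval v (rename (Fin.castLE h) p) = algebraMap R S (constantCoeff p) := by
  rw [aeval_rename, show v ∘ Fin.castLE h = 0 by ext i; exact hv i, aeval_zero]

end MvPolynomial

namespace BrauerSeveriChart

noncomputable def F₁ (ω : ℂ) (f : MvPolynomial (Fin 3) ℂ) : MvPolynomial (Fin 7) ℂ :=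
  X 4 ^ 3 - C ω * X 3 ^ 2 * X 6 + (1 - C ω) * X 3 * X 4 * X 5 -
    rename (Fin.castLE (by norm_num)) f

noncomputable def F₂ (ω : ℂ) (g : MvPolynomial (Fin 3) ℂ) : MvPolynomial (Fin 7) ℂ :=
  X 5 ^ 3 - C (ω ^ 2) * X 3 * X 6 ^ 2 - (1 - C ω) * X 3 * X 4 * X 5 -
    rename (Fin.castLE (by norm_num)) g

variable {ω : ℂ} (f g : MvPolynomial (Fin 3) ℂ)

theorem finSuccLastEquiv_F₁ :
    finSuccLastEquiv ℂ 6 (F₁ ω f) =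
      Polynomial.C (-(C ω * X 3 ^ 2)) * Polynomial.X +
        Polynomial.C (X 4 ^ 3 + (1 - C ω) * X 3 * X 4 * X 5 -
          rename (Fin.castLE (by norm_num)) f) := by
  have h3 : finSuccLastEquiv ℂ 6 (X 3) = Polynomial.C (X 3) := finSuccLastEquiv_X_castSucc 3
  have h4 : finSuccLastEquiv ℂ 6 (X 4) = Polynomial.C (X 4) := finSuccLastEquiv_X_castSucc 4
  have h5 : finSuccLastEquiv ℂ 6 (X 5) = Polynomial.C (X 5) := finSuccLastEquiv_X_castSucc 5
  have h6 : finSuccLastEquiv ℂ 6 (X 6) = Polynomial.X := finSuccLastEquiv_X_last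
  have hf : rename (Fin.castLE (by norm_num : 3 ≤ 7)) f =
      rename Fin.castSucc (rename (Fin.castLE (by norm_num : 3 ≤ 6)) f) := by
    rw [rename_rename]; rfl
  simp only [F₁, hf, map_sub, map_add, map_mul, map_pow, map_one, map_neg,
    finSuccLastEquiv_C, h3, h4, h5, h6, finSuccLastEquiv_rename_castSucc]
  ring

theorem isRelPrime_coeffs_F₁ (hω : ω ≠ 0) :
    IsRelPrime (-(C ω * X 3 ^ 2) : MvPolynomial (Fin 6) ℂ)
      (X 4 ^ 3 + (1 - C ω) * X 3 * X 4 * X 5 - rename (Fin.castLE (by norm_num)) f) := by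
  have hX : ¬ X 3 ∣ X 4 ^ 3 + (1 - C ω) * X 3 * X 4 * X 5 -
      rename (Fin.castLE (by norm_num : 3 ≤ 6)) f := by
    intro h
    let v : Fin 6 → Polynomial ℂ := ![0, 0, 0, 0, Polynomial.X, 0]
    have hv : ∀ i : Fin 3, v (Fin.castLE (by norm_num) i) = 0 := by
      intro i; fin_cases i <;> rfl
    have hX3 : aeval v (X 3 : MvPolynomial (Fin 6) ℂ) = 0 := aeval_X v 3
    have hB : aeval v (X 4 ^ 3 + (1 - C ω) * X 3 * X 4 * X 5 -
        rename (Fin.castLE (by norm_num : 3 ≤ 6)) f) =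
        Polynomial.X ^ 3 - Polynomial.C (constantCoeff f) := by
      simp [v, aeval_rename_castLE_of_forall_eq_zero _ hv]
    have := map_dvd (aeval v) h
    rw [hX3, hB, zero_dvd_iff] at this
    exact Polynomial.X_pow_sub_C_ne_zero three_pos _ this
  rw [← neg_mul, ← map_neg, isRelPrime_mul_unit_left_left ((neg_ne_zero.2 hω).isUnit.map C)]
  exact (X_prime.irreducible.isRelPrime_iff_not_dvd.2 hX).pow_left

theorem prime_F₁ (hω : ω ≠ 0) : Prime (F₁ ω f) := by
  rw [← UniqueFactorizationMonoid.irreducible_iff_prime,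
    ← MulEquiv.irreducible_iff (finSuccLastEquiv ℂ 6), finSuccLastEquiv_F₁]
  exact Polynomial.irreducible_C_mul_X_add_C (by simp [hω]) (isRelPrime_coeffs_F₁ f hω)

theorem not_F₁_dvd_F₂ (hω : ω ≠ 0) : ¬ F₁ ω f ∣ F₂ ω g := by
  intro h
  let v : Fin 7 → Polynomial ℂ := ![0, 0, 0, Polynomial.X, 0, 0, 1]
  have hv : ∀ i : Fin 3, v (Fin.castLE (by norm_num) i) = 0 := by
    intro i; fin_cases i <;> rfl
  have h₁ : aeval v (F₁ ω f) =
      -(Polynomial.C ω * Polynomial.X ^ 2) - Polynomial.C (constantCoeff f) := by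
    simp [F₁, v, aeval_rename_castLE_of_forall_eq_zero _ hv]
  have h₂ : aeval v (F₂ ω g) =
      -(Polynomial.C (ω ^ 2) * Polynomial.X) - Polynomial.C (constantCoeff g) := by
    simp [F₂, v, aeval_rename_castLE_of_forall_eq_zero _ hv]
  have hdeg₁ : (aeval v (F₁ ω f)).natDegree = 2 := by
    rw [h₁]; compute_degree!
  have hdeg₂ : (aeval v (F₂ ω g)).natDegree = 1 := by
    rw [h₂]; compute_degree!
    rw [← Polynomial.C_pow, Polynomial.coeff_C_zero]; exact pow_ne_zero 2 hω
  have hF₂ : aeval v (F₂ ω g) ≠ 0 := fun h0 => by simp [h0] at hdeg₂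
  have := Polynomial.natDegree_le_of_dvd (map_dvd (aeval v) h) hF₂
  omega

theorem span_F₁_F₂_ne_top : Ideal.span {F₁ ω f, F₂ ω g} ≠ ⊤ := by
  obtain ⟨y, hy⟩ := IsAlgClosed.exists_pow_nat_eq (constantCoeff f) three_pos
  obtain ⟨z, hz⟩ := IsAlgClosed.exists_pow_nat_eq (constantCoeff g) three_pos
  let v : Fin 7 → ℂ := ![0, 0, 0, 0, y, z, 0]
  have hv : ∀ i : Fin 3, v (Fin.castLE (by norm_num) i) = 0 := by
    intro i; fin_cases i <;> rfl
  have hc (p : MvPolynomial (Fin 3) ℂ) :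
      eval v (rename (Fin.castLE (by norm_num)) p) = constantCoeff p :=
    aeval_rename_castLE_of_forall_eq_zero _ hv p
  refine ne_top_of_le_ne_top (RingHom.ker_ne_top (eval v)) (Ideal.span_le.2 ?_)
  rintro _ (rfl | rfl) <;> simp [F₁, F₂, v, hc, hy, hz]

end BrauerSeveriChart

open BrauerSeveriChart

theorem stmt_19 (ω : ℂ) (hω : IsPrimitiveRoot ω 3) (f g : MvPolynomial (Fin 3) ℂ)
    (F1 F2 : MvPolynomial (Fin 7) ℂ)
    (hF1 : F1 = X 4 ^ 3 - C ω * X 3 ^ 2 * X 6 + (1 - C ω) * X 3 * X 4 * X 5 -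
      rename (Fin.castLE (by norm_num)) f)
    (hF2 : F2 = X 5 ^ 3 - C (ω ^ 2) * X 3 * X 6 ^ 2 - (1 - C ω) * X 3 * X 4 * X 5 -
      rename (Fin.castLE (by norm_num)) g) :
    (∀ d : MvPolynomial (Fin 7) ℂ, d ∣ F1 → d ∣ F2 → IsUnit d) ∧
      RingTheory.Sequence.IsRegular (MvPolynomial (Fin 7) ℂ) [F1, F2] := by
  have hω₀ : ω ≠ 0 := hω.ne_zero three_ne_zero
  obtain rfl : F1 = F₁ ω f := hF1
  obtain rfl : F2 = F₂ ω g := hF2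
  have hprime := prime_F₁ f hω₀
  have hndvd := not_F₁_dvd_F₂ f g hω₀
  exact ⟨hprime.irreducible.isRelPrime_iff_not_dvd.2 hndvd,
    hprime.isRegular_pair hndvd (span_F₁_F₂_ne_top f g)⟩
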